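/- Let g and g' be finitely supported probability mass functions on the positive integers such that g' first-order stochastically dominates g (i.e., Σ_{k ≤ m} g'(k) ≤ Σ_{k ≤ m} g(k) for every m). Then for any 0 ≤ L ≤ L' ≤ 1, we have 1 - Σ_k g(k)(1-L)^k ≤ 1 - Σ_k g'(k)(1-L')^k. In words, the informed fraction Γ weakly increases under a FOSD shift of the in-degree distribution combined with an increase in the fraction of active links. -/

import Mathlib

/-!
Write `x = 1 - L`. By Abel summation, `∑ (g k - g' k) x ^ k` is a combination of the partial sums
of `g - g'` with the nonnegative weights `x ^ N` and `x ^ k - x ^ (k + 1)`, and FOSD says exactly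
that these partial sums are nonnegative; hence `Γ_g(L) ≤ Γ_{g'}(L)`. Passing from `L` to `L'`
only shrinks every power `(1 - L) ^ k`, so `Γ_{g'}(L) ≤ Γ_{g'}(L')`.
-/

open Finset

theorem Finset.sum_range_mul_nonneg_of_antitone {R : Type*} [CommRing R] [PartialOrder R]
    [IsOrderedRing R] {f a : ℕ → R} (hf : Antitone f) (hf₀ : ∀ i, 0 ≤ f i)
    (ha : ∀ m, 0 ≤ ∑ i ∈ range m, a i) (n : ℕ) :
    0 ≤ ∑ i ∈ range n, f i * a i := by
  have hparts := sum_range_by_parts f a n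
  simp only [smul_eq_mul] at hparts
  have hincrements : ∑ i ∈ range (n - 1), (f (i + 1) - f i) * ∑ j ∈ range (i + 1), a j ≤ 0 :=
    sum_nonpos fun i _ =>
      mul_nonpos_of_nonpos_of_nonneg (sub_nonpos.2 (hf i.le_succ)) (ha (i + 1))
  rw [hparts]
  exact sub_nonneg.2 (hincrements.trans (mul_nonneg (hf₀ _) (ha n)))

theorem sum_range_mul_pow_le_of_partialSums_le {R : Type*} [CommRing R] [PartialOrder R]
    [IsOrderedRing R] {a b : ℕ → R} (hab : ∀ m, ∑ k ∈ range m, a k ≤ ∑ k ∈ range m, b k)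
    {x : R} (hx₀ : 0 ≤ x) (hx₁ : x ≤ 1) (n : ℕ) :
    ∑ k ∈ range n, a k * x ^ k ≤ ∑ k ∈ range n, b k * x ^ k := by
  have key := sum_range_mul_nonneg_of_antitone (pow_right_anti₀ hx₀ hx₁) (fun i => pow_nonneg hx₀ i)
    (a := fun k => b k - a k) (fun m => by simpa only [sum_sub_distrib, sub_nonneg] using hab m) n
  simpa only [mul_comm (x ^ _), sub_mul, sum_sub_distrib, sub_nonneg] using key

theorem sum_range_mul_pow_le_of_le {R : Type*} [CommSemiring R] [PartialOrder R]
    [IsOrderedRing R] {a : ℕ → R} (ha : ∀ k, 0 ≤ a k) {x y : R} (hx : 0 ≤ x) (hxy : x ≤ y)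
    (n : ℕ) : ∑ k ∈ range n, a k * x ^ k ≤ ∑ k ∈ range n, a k * y ^ k :=
  sum_le_sum fun k _ => mul_le_mul_of_nonneg_left (pow_le_pow_left₀ hx hxy k) (ha k)

theorem stmt_11_general (N : ℕ) (g g' : ℕ → ℝ)
    (hg' : ∀ k, 0 ≤ g' k)
    (hFOSD : ∀ m : ℕ, ∑ k ∈ Finset.range (m + 1), g' k ≤ ∑ k ∈ Finset.range (m + 1), g k)
    (L L' : ℝ) (h0 : 0 ≤ L) (hLL' : L ≤ L') (h1 : L' ≤ 1) :
    1 - ∑ k ∈ Finset.range (N + 1), g k * (1 - L) ^ k ≤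
      1 - ∑ k ∈ Finset.range (N + 1), g' k * (1 - L') ^ k := by
  have hpartial : ∀ m, ∑ k ∈ range m, g' k ≤ ∑ k ∈ range m, g k
    | 0 => by simp
    | m + 1 => hFOSD m
  have hdominance := sum_range_mul_pow_le_of_partialSums_le hpartial
    (by linarith : (0 : ℝ) ≤ 1 - L) (by linarith) (N + 1)
  have hbase := sum_range_mul_pow_le_of_le hg'
    (by linarith : (0 : ℝ) ≤ 1 - L') (by linarith : 1 - L' ≤ 1 - L) (N + 1)
  linarith

/-- If `g'` FOSD-dominates `g` and `0 ≤ L ≤ L' ≤ 1`, then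
`Γ_g(L) ≤ Γ_{g'}(L')`. -/
theorem stmt_11 (N : ℕ) (g g' : ℕ → ℝ)
    (hg : ∀ k, 0 ≤ g k) (hg' : ∀ k, 0 ≤ g' k)
    (hsupp : ∀ k, g k ≠ 0 → 1 ≤ k ∧ k ≤ N)
    (hsupp' : ∀ k, g' k ≠ 0 → 1 ≤ k ∧ k ≤ N)
    (hsum : ∑ k ∈ Finset.range (N + 1), g k = 1)
    (hsum' : ∑ k ∈ Finset.range (N + 1), g' k = 1)
    (hFOSD : ∀ m : ℕ, ∑ k ∈ Finset.range (m + 1), g' k ≤ ∑ k ∈ Finset.range (m + 1), g k)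
    (L L' : ℝ) (h0 : 0 ≤ L) (hLL' : L ≤ L') (h1 : L' ≤ 1) :
    1 - ∑ k ∈ Finset.range (N + 1), g k * (1 - L) ^ k ≤
      1 - ∑ k ∈ Finset.range (N + 1), g' k * (1 - L') ^ k :=
  stmt_11_general N g g' hg' hFOSD L L' h0 hLL' h1
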